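/- arXiv:2602.22353 — 2 statements merged into one kernel-verified Lean document; each statement's English description precedes it below -/
import Mathlib

section
/- For every integer N ≥ 2, the sum of gcd(c, N) over c from 1 to N − 1 is at most 2(N − 1)√N. -/
/-!
Grouping `c` by the value `d = gcd(c, N)`, each `c` in the fibre of `d` is a multiple of `d`
below `N`, so each fibre contributes at most `d * ((N - 1) / d) ≤ N - 1`, and there are `τ(N)`
fibres. Finally `τ(N) ≤ 2√N`, since every divisor `d` of `N` is at most `√N` or is `N / e` for
a divisor `e = N / d ≤ √N`.
-/

open Finset

namespace Nat

theorem card_divisors_le_two_mul_sqrt (n : ℕ) : #n.divisors ≤ 2 * n.sqrt := by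
  have hcover : n.divisors ⊆ Icc 1 n.sqrt ∪ (Icc 1 n.sqrt).image (n / ·) := by
    intro d hd
    obtain ⟨hdvd, hn⟩ := mem_divisors.1 hd
    rcases le_or_gt d n.sqrt with hle | hlt
    · exact mem_union_left _ (mem_Icc.2 ⟨pos_of_mem_divisors hd, hle⟩)
    · have hcodiv_lt : n / d < d := (Nat.div_lt_iff_lt_mul (by omega)).2 <| by
        have := lt_succ_sqrt n
        nlinarith
      refine mem_union_right _ (mem_image.2 ⟨n / d, mem_Icc.2 ⟨?_, ?_⟩, Nat.div_div_self hdvd hn⟩)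
      · exact Nat.div_pos (divisor_le hd) (by omega)
      · refine le_sqrt.2 (le_trans ?_ (div_mul_le_self n d))
        exact Nat.mul_le_mul_left _ hcodiv_lt.le
  calc #n.divisors ≤ #(Icc 1 n.sqrt ∪ (Icc 1 n.sqrt).image (n / ·)) := card_le_card hcover
    _ ≤ #(Icc 1 n.sqrt) + #((Icc 1 n.sqrt).image (n / ·)) := card_union_le _ _
    _ ≤ n.sqrt + n.sqrt := add_le_add (by simp) (Finset.card_image_le.trans (by simp))
    _ = 2 * n.sqrt := (two_mul _).symm

theorem sum_gcd_fiber_le (m n d : ℕ) : ∑ c ∈ Ioc 0 m with c.gcd n = d, c.gcd n ≤ m :=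
  calc ∑ c ∈ Ioc 0 m with c.gcd n = d, c.gcd n = #{c ∈ Ioc 0 m | c.gcd n = d} * d :=
        sum_const_nat fun _ hc => (mem_filter.1 hc).2
    _ ≤ #{c ∈ Ioc 0 m | d ∣ c} * d := by
        gcongr with c
        exact fun hc => hc ▸ gcd_dvd_left c n
    _ = m / d * d := by rw [Ioc_filter_dvd_card_eq_div]
    _ ≤ m := div_mul_le_self m d

theorem sum_gcd_le_mul_card_divisors (m : ℕ) {n : ℕ} (hn : n ≠ 0) :
    ∑ c ∈ Ioc 0 m, c.gcd n ≤ m * #n.divisors := by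
  have hmaps : ∀ c ∈ Ioc 0 m, c.gcd n ∈ n.divisors :=
    fun c _ => mem_divisors.2 ⟨gcd_dvd_right c n, hn⟩
  rw [← sum_fiberwise_of_maps_to hmaps, mul_comm, ← smul_eq_mul, ← sum_const]
  exact sum_le_sum fun d _ => sum_gcd_fiber_le m n d

end Nat

/-- For every integer `N ≥ 2`, `∑_{c=1}^{N-1} gcd(c, N) ≤ 2(N-1)√N`. -/
theorem gcd_sum_le (N : ℕ) (hN : 2 ≤ N) :
    ((∑ c ∈ Finset.Icc 1 (N - 1), Nat.gcd c N : ℕ) : ℝ) ≤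
      2 * ((N : ℝ) - 1) * Real.sqrt N := by
  have hsum := Nat.sum_gcd_le_mul_card_divisors (N - 1) (n := N) (by omega)
  have hcard : (#N.divisors : ℝ) ≤ 2 * Real.sqrt N := by
    calc (#N.divisors : ℝ) ≤ 2 * (N.sqrt : ℝ) := by exact_mod_cast N.card_divisors_le_two_mul_sqrt
      _ ≤ 2 * Real.sqrt N := by gcongr; exact Real.nat_sqrt_le_real_sqrt
  rw [← Finset.Icc_add_one_left_eq_Ioc] at hsum
  calc ((∑ c ∈ Icc 1 (N - 1), c.gcd N : ℕ) : ℝ) ≤ ((N - 1 : ℕ) : ℝ) * #N.divisors := by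
        exact_mod_cast hsum
    _ ≤ ((N : ℝ) - 1) * (2 * Real.sqrt N) := by
        rw [Nat.cast_sub (by omega), Nat.cast_one]
        gcongr
        exact sub_nonneg.2 (by exact_mod_cast (by omega : 1 ≤ N))
    _ = 2 * ((N : ℝ) - 1) * Real.sqrt N := by ring
end

section
/- For all real numbers b₁, b₂ with 2 ≤ b₁ ≤ b₂, one has √b₁ + √b₂ ≤ √2 + √((b₁ − 1)(b₂ − 1) + 1). -/
/-- For reals `2 ≤ b₁ ≤ b₂`, `√b₁ + √b₂ ≤ √2 + √((b₁-1)(b₂-1) + 1)`. -/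
theorem sqrt_sum_le (b₁ b₂ : ℝ) (h₁ : 2 ≤ b₁) (h₂ : b₁ ≤ b₂) :
    Real.sqrt b₁ + Real.sqrt b₂ ≤
      Real.sqrt 2 + Real.sqrt ((b₁ - 1) * (b₂ - 1) + 1) := by
  set x := Real.sqrt 2 with hx
  set y := Real.sqrt b₁ with hy
  set z := Real.sqrt b₂ with hz
  set w := Real.sqrt ((b₁ - 1) * (b₂ - 1) + 1) with hw
  have hb2 : (2:ℝ) ≤ b₂ := le_trans h₁ h₂
  have hA : (0:ℝ) ≤ (b₁ - 1) * (b₂ - 1) + 1 := by nlinarith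
  have hx2 : x ^ 2 = 2 := Real.sq_sqrt (by norm_num)
  have hy2 : y ^ 2 = b₁ := Real.sq_sqrt (by linarith)
  have hz2 : z ^ 2 = b₂ := Real.sq_sqrt (by linarith)
  have hw2 : w ^ 2 = (b₁ - 1) * (b₂ - 1) + 1 := Real.sq_sqrt hA
  have hx0 : 0 < x := by rw [hx]; positivity
  have hy0 : 0 < y := by rw [hy]; exact Real.sqrt_pos.2 (by linarith)
  have hz0 : 0 < z := by rw [hz]; exact Real.sqrt_pos.2 (by linarith)
  have hw0 : 0 ≤ w := Real.sqrt_nonneg _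
  have hxy : x ≤ y := Real.sqrt_le_sqrt h₁
  have hb21 : (0:ℝ) ≤ b₂ - 1 := by linarith
  -- z ≤ √2 * (b₂ - 1)
  have hzb : z ≤ x * (b₂ - 1) := by
    have h : b₂ ≤ 2 * (b₂ - 1) ^ 2 := by nlinarith
    calc z ≤ Real.sqrt (2 * (b₂ - 1) ^ 2) := Real.sqrt_le_sqrt h
      _ = x * (b₂ - 1) := by
          rw [hx, Real.sqrt_mul (by norm_num), Real.sqrt_sq hb21]
  -- w ≤ √b₁ * (b₂ - 1)
  have hwb : w ≤ y * (b₂ - 1) := by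
    have h : (b₁ - 1) * (b₂ - 1) + 1 ≤ b₁ * (b₂ - 1) ^ 2 := by nlinarith
    calc w ≤ Real.sqrt (b₁ * (b₂ - 1) ^ 2) := Real.sqrt_le_sqrt h
      _ = y * (b₂ - 1) := by
          rw [hy, Real.sqrt_mul (by linarith), Real.sqrt_sq hb21]
  -- key products
  have hE1 : (w - z) * (w + z) = (b₁ - 2) * (b₂ - 1) := by nlinarith [hw2, hz2]
  have hE2 : (y - x) * (y + x) = b₁ - 2 := by nlinarith [hy2, hx2]
  have hC : w + z ≤ (b₂ - 1) * (x + y) := by linarith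
  have hyx0 : 0 ≤ y - x := by linarith
  have hkey : (y - x) * (w + z) ≤ (w - z) * (w + z) := by
    calc (y - x) * (w + z) ≤ (y - x) * ((b₂ - 1) * (x + y)) :=
          mul_le_mul_of_nonneg_left hC hyx0
      _ = (w - z) * (w + z) := by rw [hE1]; nlinarith [hE2]
  have hwz0 : 0 < w + z := by linarith
  have := le_of_mul_le_mul_right hkey hwz0
  linarith
end
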